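/- Let (V; ρ, θ, D, R_V) be a representation of a modified Rota-Baxter Lie-Yamaguti algebra (L,[-,-],{-,-,-},R). For a linear map f : L → V define Φ¹(f) := f∘R - R_V∘f, δ¹_I(f)(x,y) := ρ(x)f(y) - ρ(y)f(x) - f([x,y]), and for a bilinear map F : L × L → V define Φ²_I(F)(x,y) := F(Rx,Ry) - R_V(F(Rx,y) + F(x,Ry)) + F(x,y) and ∂¹_I(g)(x,y) := ρ_R(x)g(y) - ρ_R(y)g(x) - g([x,y]_R) for a linear map g : L → V, where ρ_R(x)u := ρ(Rx)u - R_V(ρ(x)u) and [x,y]_R := [Rx,y] + [x,Ry]. Then for every linear map f : L → V and all x, y in L: Φ²_I(δ¹_I(f))(x,y) = ∂¹_I(Φ¹(f))(x,y). -/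

import Mathlib

/-- A Lie-Yamaguti algebra: bilinear bracket `br`, trilinear bracket `tr`,
satisfying (LY1)-(LY6). -/
structure LieYamaguti (K : Type*) (L : Type*) [Field K] [AddCommGroup L] [Module K L] where
  br : L →ₗ[K] L →ₗ[K] L
  tr : L →ₗ[K] L →ₗ[K] L →ₗ[K] L
  ly1 : ∀ x y, br x y = - br y x
  ly2 : ∀ x y z, tr x y z = - tr y x z
  ly3 : ∀ x y z,
    br (br x y) z + br (br y z) x + br (br z x) y + tr x y z + tr y z x + tr z x y = 0
  ly4 : ∀ x y z a, tr (br x y) z a + tr (br z x) y a + tr (br y z) x a = 0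
  ly5 : ∀ a b x y, tr a b (br x y) = br (tr a b x) y + br x (tr a b y)
  ly6 : ∀ a b x y z,
    tr a b (tr x y z) = tr (tr a b x) y z + tr x (tr a b y) z + tr x y (tr a b z)

/-- A modified Rota-Baxter operator on a Lie-Yamaguti algebra. -/
def IsMRB {K L : Type*} [Field K] [AddCommGroup L] [Module K L]
    (A : LieYamaguti K L) (R : L →ₗ[K] L) : Prop :=
  (∀ x y, A.br (R x) (R y) = R (A.br (R x) y + A.br x (R y)) - A.br x y) ∧
  (∀ x y z, A.tr (R x) (R y) (R z) =
      R (A.tr x (R y) (R z) + A.tr (R x) y (R z) + A.tr (R x) (R y) z + A.tr x y z)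
      - A.tr (R x) y z - A.tr x (R y) z - A.tr x y (R z))

/-- A representation of a Lie-Yamaguti algebra on `V`, axioms (R1)-(R7). -/
structure LYRep (K L V : Type*) [Field K] [AddCommGroup L] [Module K L]
    [AddCommGroup V] [Module K V] (A : LieYamaguti K L) where
  ρ : L →ₗ[K] Module.End K V
  θ : L →ₗ[K] L →ₗ[K] Module.End K V
  D : L →ₗ[K] L →ₗ[K] Module.End K V
  r1 : ∀ x y, D x y - θ y x + θ x y + ρ (A.br x y) - ρ x * ρ y + ρ y * ρ x = 0
  r2 : ∀ x y z, D (A.br x y) z + D (A.br y z) x + D (A.br z x) y = 0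
  r3 : ∀ x y a, θ (A.br x y) a = θ x a * ρ y - θ y a * ρ x
  r4 : ∀ a b x, D a b * ρ x = ρ x * D a b + ρ (A.tr a b x)
  r5 : ∀ x a b, θ x (A.br a b) = ρ a * θ x b - ρ b * θ x a
  r6 : ∀ a b x y, D a b * θ x y = θ x y * D a b + θ (A.tr a b x) y + θ x (A.tr a b y)
  r7 : ∀ a x y z, θ a (A.tr x y z) = θ y z * θ a x - θ x z * θ a y + D x y * θ a z

/-- A representation of a modified Rota-Baxter Lie-Yamaguti algebra `(L, R)`:
a representation of the underlying Lie-Yamaguti algebra together with a linear map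
`RV` satisfying (4.1) and (4.2). -/
structure MRBRep (K L V : Type*) [Field K] [AddCommGroup L] [Module K L]
    [AddCommGroup V] [Module K V] (A : LieYamaguti K L) (R : L →ₗ[K] L)
    extends LYRep K L V A where
  RV : V →ₗ[K] V
  c41 : ∀ (x : L) (u : V), ρ (R x) (RV u) = RV (ρ (R x) u + ρ x (RV u)) - ρ x u
  c42 : ∀ (x y : L) (u : V),
    θ (R x) (R y) (RV u) =
      RV (θ (R x) (R y) u + θ (R x) y (RV u) + θ x (R y) (RV u) + θ x y u)
      - θ (R x) y u - θ x y (RV u) - θ x (R y) u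

/- Both sides are sums of a `ρ`-part and an `f ∘ [-,-]`-part, which match separately:
the `ρ`-parts by (4.1) for `R_V`, the bracket parts by the modified Rota-Baxter identity
for `[-,-]`. -/

section

variable {K L V : Type*} [Field K] [AddCommGroup L] [Module K L] [AddCommGroup V] [Module K V]
  {A : LieYamaguti K L} {R : L →ₗ[K] L}

theorem MRBRep.rhoR_sub_RV (rep : MRBRep K L V A R) (x : L) (u v : V) :
    rep.ρ (R x) (v - rep.RV u) - rep.RV (rep.ρ x (v - rep.RV u))
      = rep.ρ (R x) v - rep.RV (rep.ρ (R x) u + rep.ρ x v) + rep.ρ x u := by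
  simp only [map_sub, rep.c41, map_add]
  abel

theorem IsMRB.map_br_sub {W : Type*} [AddCommGroup W] [Module K W] (hR : IsMRB A R)
    (f : L →ₗ[K] W) (T : W →ₗ[K] W) (x y : L) :
    f (R (A.br (R x) y + A.br x (R y))) - T (f (A.br (R x) y + A.br x (R y)))
      = f (A.br (R x) (R y)) - T (f (A.br (R x) y) + f (A.br x (R y))) + f (A.br x y) := by
  rw [hR.1, map_sub, map_add f]
  abel

end

theorem chain_map_degree_one_I_general (K L V : Type*) [Field K]
    [AddCommGroup L] [Module K L] [AddCommGroup V] [Module K V]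
    (A : LieYamaguti K L) (R : L →ₗ[K] L) (hR : IsMRB A R)
    (rep : MRBRep K L V A R) (f : L →ₗ[K] V) :
    ∀ (Phif : L → V) (deltaf : L → L → V) (ρR : L → V → V) (brR : L → L → L),
      (∀ x, Phif x = f (R x) - rep.RV (f x)) →
      (∀ x y, deltaf x y = rep.ρ x (f y) - rep.ρ y (f x) - f (A.br x y)) →
      (∀ x u, ρR x u = rep.ρ (R x) u - rep.RV (rep.ρ x u)) →
      (∀ x y, brR x y = A.br (R x) y + A.br x (R y)) →
      ∀ x y,
        deltaf (R x) (R y) - rep.RV (deltaf (R x) y + deltaf x (R y)) + deltaf x y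
          = ρR x (Phif y) - ρR y (Phif x) - Phif (brR x y) := by
  intro Phif deltaf ρR brR hPhi hdelta hρ hbr x y
  have hρ_part : ∀ a b, ρR a (Phif b) = rep.ρ (R a) (f (R b))
      - rep.RV (rep.ρ (R a) (f b) + rep.ρ a (f (R b))) + rep.ρ a (f b) := by
    intro a b
    rw [hρ, hPhi, rep.rhoR_sub_RV]
  have hbr_part : Phif (brR x y) = f (A.br (R x) (R y))
      - rep.RV (f (A.br (R x) y) + f (A.br x (R y))) + f (A.br x y) := by
    rw [hPhi, hbr, hR.map_br_sub]
  rw [hρ_part, hρ_part, hbr_part]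
  simp only [hdelta, map_add, map_sub]
  abel

/-- The chain map identity in degree one, binary part: `Φ²_I(δ¹_I f) = ∂¹_I(Φ¹ f)`. -/
theorem chain_map_degree_one_I (K L V : Type*) [Field K] [CharZero K]
    [AddCommGroup L] [Module K L] [AddCommGroup V] [Module K V]
    (A : LieYamaguti K L) (R : L →ₗ[K] L) (hR : IsMRB A R)
    (rep : MRBRep K L V A R) (f : L →ₗ[K] V) :
    ∀ (Phif : L → V) (deltaf : L → L → V) (ρR : L → V → V) (brR : L → L → L),
      (∀ x, Phif x = f (R x) - rep.RV (f x)) →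
      (∀ x y, deltaf x y = rep.ρ x (f y) - rep.ρ y (f x) - f (A.br x y)) →
      (∀ x u, ρR x u = rep.ρ (R x) u - rep.RV (rep.ρ x u)) →
      (∀ x y, brR x y = A.br (R x) y + A.br x (R y)) →
      ∀ x y,
        deltaf (R x) (R y) - rep.RV (deltaf (R x) y + deltaf x (R y)) + deltaf x y
          = ρR x (Phif y) - ρR y (Phif x) - Phif (brR x y) :=
  chain_map_degree_one_I_general K L V A R hR rep f
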